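/- Fix A > 0 and n ≥ 1, and let y₀ = α_n ∑_{i=1}^n e_i, where e_i is the i-th standard unit sequence. Then for every real square-summable sequence u with u_i = 0 for all i ≤ n, one has f(y₀ + u) ≥ V(√(f(u)/2)), where V : [0,∞) → [0,∞) is defined by V(x) = nα_n² + (2/(1+√(1+A)))x² + √( (n² + An)α_n⁴ + (4nα_n²/(1+√(1+A)))x² + (4(1+A)/(1+√(1+A))²)x⁴ ). -/

import Mathlib

/-!
Write `S₂ = ‖u‖₂²`, `S₄ = ‖u‖₄⁴`, `t = f(u)/2`, `c = 1 + √(1+A)` and `β = α_n²`. Since `y₀` and `u`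
have disjoint supports, `f(y₀ + u) = nβ + S₂ + √((nβ + S₂)² + A(nβ² + S₄))`, and `2t - S₂ = √(S₂² + AS₄)`
gives `AS₄ = 4t² - 4tS₂`. Using `c² - 2c = A`, both `f(y₀ + u)` and `V(√t)` then take the form
`nβ + g(s)` with `g(s) = s + √((s - k)² + m)`, `k = 2t - nβ`, `m = Anβ² + 4tnβ`, evaluated at
`s = S₂` and at `s = 2t/c` respectively. The map `g` is monotone because `s ↦ √((s - k)² + m)` is
`1`-Lipschitz, and `2t/c ≤ S₂` because `S₄ ≤ S₂²`.
-/

/-- `f(x) = ‖x‖₂² + √(‖x‖₂⁴ + A‖x‖₄⁴)` for a real sequence `x`. -/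
noncomputable def orliczF (A : ℝ) (x : ℕ → ℝ) : ℝ :=
  (∑' i, (x i) ^ 2) + Real.sqrt ((∑' i, (x i) ^ 2) ^ 2 + A * ∑' i, (x i) ^ 4)

/-- `α_n = √((1+√(1+A)) / (n+√(n²+An)))`. -/
noncomputable def alphaN (A : ℝ) (n : ℕ) : ℝ :=
  Real.sqrt ((1 + Real.sqrt (1 + A)) / (n + Real.sqrt ((n : ℝ) ^ 2 + A * n)))

/-- The lower-bound function `V` from the KKT minimization. -/
noncomputable def Vfun (A : ℝ) (n : ℕ) (x : ℝ) : ℝ :=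
  n * alphaN A n ^ 2 + (2 / (1 + Real.sqrt (1 + A))) * x ^ 2 +
    Real.sqrt (((n : ℝ) ^ 2 + A * n) * alphaN A n ^ 4 +
      (4 * n * alphaN A n ^ 2 / (1 + Real.sqrt (1 + A))) * x ^ 2 +
      (4 * (1 + A) / (1 + Real.sqrt (1 + A)) ^ 2) * x ^ 4)

theorem monotone_add_sqrt_sq_sub_add (k : ℝ) {m : ℝ} (hm : 0 ≤ m) :
    Monotone fun s : ℝ => s + √((s - k) ^ 2 + m) := by
  intro s s' hss'
  have hR : -(s' - k) ≤ √((s' - k) ^ 2 + m) :=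
    neg_le.2 (Real.neg_sqrt_le_of_sq_le (le_add_of_nonneg_right hm))
  have hle : √((s - k) ^ 2 + m) ≤ s' - s + √((s' - k) ^ 2 + m) := by
    rw [Real.sqrt_le_left (by linarith [Real.sqrt_nonneg ((s' - k) ^ 2 + m)])]
    nlinarith [Real.sq_sqrt (by positivity : 0 ≤ (s' - k) ^ 2 + m),
      mul_nonneg (sub_nonneg.2 hss') (neg_le_iff_add_nonneg.1 hR)]
  dsimp only
  linarith

section LpSequences

variable {ι : Type*} {u : ι → ℝ}

theorem pow_four_le_sq_mul_tsum_sq (hu : Summable fun i => u i ^ 2) (i : ι) :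
    u i ^ 4 ≤ u i ^ 2 * ∑' j, u j ^ 2 := by
  have := hu.le_tsum i fun j _ => sq_nonneg (u j)
  nlinarith [sq_nonneg (u i)]

theorem summable_pow_four_of_summable_sq (hu : Summable fun i => u i ^ 2) :
    Summable fun i => u i ^ 4 :=
  (hu.mul_right _).of_nonneg_of_le (fun i => by positivity) (pow_four_le_sq_mul_tsum_sq hu)

theorem tsum_pow_four_le_sq_tsum_sq (hu : Summable fun i => u i ^ 2) :
    ∑' i, u i ^ 4 ≤ (∑' i, u i ^ 2) ^ 2 := by
  calc ∑' i, u i ^ 4 ≤ ∑' i, u i ^ 2 * ∑' j, u j ^ 2 :=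
        (summable_pow_four_of_summable_sq hu).tsum_le_tsum (pow_four_le_sq_mul_tsum_sq hu)
          (hu.mul_right _)
    _ = (∑' i, u i ^ 2) ^ 2 := by rw [tsum_mul_right, sq]

theorem tsum_add_pow_of_mul_eq_zero {y : ι → ℝ} {k : ℕ} (hk : k ≠ 0) (hyu : ∀ i, y i * u i = 0)
    (hy : Summable fun i => y i ^ k) (hu : Summable fun i => u i ^ k) :
    ∑' i, (y i + u i) ^ k = ∑' i, y i ^ k + ∑' i, u i ^ k := by
  have hpow : ∀ i, (y i + u i) ^ k = y i ^ k + u i ^ k := fun i => by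
    rcases mul_eq_zero.1 (hyu i) with h | h <;> simp [h, zero_pow hk]
  rw [tsum_congr hpow, hy.tsum_add hu]

end LpSequences

theorem orliczF_le_mul_tsum_sq {A : ℝ} (hA : 0 ≤ A) {u : ℕ → ℝ}
    (hu : Summable fun i => u i ^ 2) :
    orliczF A u ≤ (1 + √(1 + A)) * ∑' i, u i ^ 2 := by
  have hS2 : 0 ≤ ∑' i, u i ^ 2 := tsum_nonneg fun i => sq_nonneg (u i)
  have hsqrt : √((∑' i, u i ^ 2) ^ 2 + A * ∑' i, u i ^ 4) ≤ √(1 + A) * ∑' i, u i ^ 2 :=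
    calc _ ≤ √((1 + A) * (∑' i, u i ^ 2) ^ 2) :=
          Real.sqrt_le_sqrt (by nlinarith [tsum_pow_four_le_sq_tsum_sq hu])
      _ = √(1 + A) * ∑' i, u i ^ 2 := by rw [Real.sqrt_mul (by linarith), Real.sqrt_sq hS2]
  rw [orliczF]
  linarith

theorem orliczF_add_of_mul_eq_zero (A : ℝ) {y u : ℕ → ℝ} (hyu : ∀ i, y i * u i = 0)
    (hy : Summable fun i => y i ^ 2) (hu : Summable fun i => u i ^ 2) :
    orliczF A (fun i => y i + u i) =
      (∑' i, y i ^ 2 + ∑' i, u i ^ 2) +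
        √((∑' i, y i ^ 2 + ∑' i, u i ^ 2) ^ 2 + A * (∑' i, y i ^ 4 + ∑' i, u i ^ 4)) := by
  rw [orliczF, tsum_add_pow_of_mul_eq_zero two_ne_zero hyu hy hu,
    tsum_add_pow_of_mul_eq_zero four_ne_zero hyu (summable_pow_four_of_summable_sq hy)
      (summable_pow_four_of_summable_sq hu)]

def blockSeq (n : ℕ) (a : ℝ) (i : ℕ) : ℝ := if 1 ≤ i ∧ i ≤ n then a else 0

theorem blockSeq_eq_zero_of_notMem {n : ℕ} (a : ℝ) {i : ℕ} (hi : i ∉ Finset.Icc 1 n) :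
    blockSeq n a i = 0 :=
  if_neg (by simpa using hi)

theorem blockSeq_mul_eq_zero {n : ℕ} (a : ℝ) {u : ℕ → ℝ} (hu : ∀ i ≤ n, u i = 0) (i : ℕ) :
    blockSeq n a i * u i = 0 := by
  unfold blockSeq
  split_ifs with h
  · rw [hu i h.2, mul_zero]
  · rw [zero_mul]

theorem summable_blockSeq_pow (n : ℕ) (a : ℝ) {k : ℕ} (hk : k ≠ 0) :
    Summable fun i => blockSeq n a i ^ k :=
  summable_of_ne_finset_zero (s := Finset.Icc 1 n) fun i hi => by
    rw [blockSeq_eq_zero_of_notMem a hi, zero_pow hk]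

theorem tsum_blockSeq_pow (n : ℕ) (a : ℝ) {k : ℕ} (hk : k ≠ 0) :
    ∑' i, blockSeq n a i ^ k = n * a ^ k := by
  rw [tsum_eq_sum (s := Finset.Icc 1 n) fun i hi => by
      rw [blockSeq_eq_zero_of_notMem a hi, zero_pow hk],
    Finset.sum_congr rfl fun i hi => by rw [blockSeq, if_pos (Finset.mem_Icc.1 hi)],
    Finset.sum_const, Nat.card_Icc, nsmul_eq_mul, add_tsub_cancel_right]

theorem orlicz_kkt_lower_bound_scalar {A c N β S₂ S₄ t : ℝ} (hA : 0 ≤ A)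
    (hc : (c - 1) ^ 2 = 1 + A) (hc0 : 0 < c) (hN : 0 ≤ N) (hβ : 0 ≤ β) (ht : 0 ≤ t)
    (hroot : (2 * t - S₂) ^ 2 = S₂ ^ 2 + A * S₄) (hb : 2 * t / c ≤ S₂) :
    N * β + 2 / c * t + √((N ^ 2 + A * N) * β ^ 2 + 4 * N * β / c * t + 4 * (1 + A) / c ^ 2 * t ^ 2)
      ≤ N * β + S₂ + √((N * β + S₂) ^ 2 + A * (N * β ^ 2 + S₄)) := by
  have hmono := monotone_add_sqrt_sq_sub_add (2 * t - N * β)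
    (m := A * N * β ^ 2 + 4 * t * (N * β)) (by positivity) hb
  have hV : (N ^ 2 + A * N) * β ^ 2 + 4 * N * β / c * t + 4 * (1 + A) / c ^ 2 * t ^ 2
      = (2 * t / c - (2 * t - N * β)) ^ 2 + (A * N * β ^ 2 + 4 * t * (N * β)) := by
    field_simp
    linear_combination (-4 * t ^ 2) * hc
  have hF : (N * β + S₂) ^ 2 + A * (N * β ^ 2 + S₄)
      = (S₂ - (2 * t - N * β)) ^ 2 + (A * N * β ^ 2 + 4 * t * (N * β)) := by
    linear_combination (-1) * hroot
  rw [hV, hF, div_mul_eq_mul_div]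
  dsimp only at hmono
  linarith

theorem orlicz_kkt_lower_bound_general (A : ℝ) (hA : 0 < A) (n : ℕ)
    (u : ℕ → ℝ) (hu : Summable fun i => (u i) ^ 2) (hsupp : ∀ i ≤ n, u i = 0) :
    Vfun A n (Real.sqrt (orliczF A u / 2))
      ≤ orliczF A (fun i => (if 1 ≤ i ∧ i ≤ n then alphaN A n else 0) + u i) := by
  set c := 1 + √(1 + A) with hc
  set S₂ := ∑' i, u i ^ 2
  set S₄ := ∑' i, u i ^ 4
  set t := orliczF A u / 2 with ht
  have hc1 : (c - 1) ^ 2 = 1 + A := by rw [hc, add_sub_cancel_left, Real.sq_sqrt (by linarith)]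
  have hS₂ : 0 ≤ S₂ := tsum_nonneg fun i => sq_nonneg (u i)
  have ht0 : 0 ≤ t := by rw [ht, orliczF]; positivity
  have hroot : (2 * t - S₂) ^ 2 = S₂ ^ 2 + A * S₄ := by
    rw [ht, orliczF]
    linear_combination Real.sq_sqrt (by positivity : 0 ≤ S₂ ^ 2 + A * S₄)
  have hb : 2 * t / c ≤ S₂ :=
    div_le_of_le_mul₀ (by positivity) hS₂ (by linarith [orliczF_le_mul_tsum_sq hA.le hu])
  change _ ≤ orliczF A fun i => blockSeq n (alphaN A n) i + u i
  rw [orliczF_add_of_mul_eq_zero A (blockSeq_mul_eq_zero _ hsupp)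
      (summable_blockSeq_pow n _ two_ne_zero) hu, tsum_blockSeq_pow n _ two_ne_zero,
    tsum_blockSeq_pow n _ four_ne_zero, Vfun, show √t ^ 4 = (√t ^ 2) ^ 2 by ring,
    Real.sq_sqrt ht0, show alphaN A n ^ 4 = (alphaN A n ^ 2) ^ 2 by ring]
  exact orlicz_kkt_lower_bound_scalar hA.le hc1 (by positivity) (Nat.cast_nonneg n) (sq_nonneg _)
    ht0 hroot hb

theorem orlicz_kkt_lower_bound (A : ℝ) (hA : 0 < A) (n : ℕ) (hn : 1 ≤ n)
    (u : ℕ → ℝ) (hu : Summable fun i => (u i) ^ 2) (hsupp : ∀ i ≤ n, u i = 0) :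
    Vfun A n (Real.sqrt (orliczF A u / 2))
      ≤ orliczF A (fun i => (if 1 ≤ i ∧ i ≤ n then alphaN A n else 0) + u i) :=
  orlicz_kkt_lower_bound_general A hA n u hu hsupp
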